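/- Let G be a finite simple graph on vertex set {1,…,n} with at least one edge and I(G) ⊆ S its edge ideal. Suppose A and B are proper homogeneous ideals of S, f ∈ S is a homogeneous polynomial of positive degree, I(G) = fB + A, and ht(A) + 1 = ht(I(G)). Then deg(f) = 1. -/

import Mathlib

open MvPolynomial

/-- The height of an ideal: the infimum of `Order.height P` over primes `P` containing it. -/
noncomputable def Ideal.ht {R : Type*} [CommRing R] (I : Ideal R) : ℕ∞ :=
  ⨅ P : {P : PrimeSpectrum R // I ≤ P.asIdeal}, Order.height P.1

/-- The depth of a local ring: the supremum of lengths of regular sequences contained in the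
maximal ideal. -/
noncomputable def IsLocalRing.depth (R : Type*) [CommRing R] [IsLocalRing R] : ℕ∞ :=
  ⨆ rs : {rs : List R // (∀ r ∈ rs, r ∈ IsLocalRing.maximalIdeal R) ∧
      RingTheory.Sequence.IsRegular R rs}, (rs.1.length : ℕ∞)

/-- A local ring is Cohen–Macaulay if its depth equals its Krull dimension. -/
def IsCohenMacaulayLocalRing (R : Type*) [CommRing R] [IsLocalRing R] : Prop :=
  (IsLocalRing.depth R : WithBot ℕ∞) = ringKrullDim R

/-- A ring is Cohen–Macaulay if its localization at every maximal ideal is a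
Cohen–Macaulay local ring. -/
def IsCohenMacaulayRing (R : Type*) [CommRing R] : Prop :=
  ∀ (m : Ideal R) [m.IsMaximal], IsCohenMacaulayLocalRing (Localization.AtPrime m)

/-- The edge ideal of a finite simple graph on vertex set `Fin n`. -/
noncomputable def edgeIdeal (k : Type*) [CommRing k] {n : ℕ} (G : SimpleGraph (Fin n)) :
    Ideal (MvPolynomial (Fin n) k) :=
  Ideal.span {p | ∃ i j, G.Adj i j ∧ p = X i * X j}

/-- An ideal of a polynomial ring is homogeneous if it contains every homogeneous
component of each of its elements. -/
def IsHomogeneousIdeal {k : Type*} [CommRing k] {σ : Type*} (I : Ideal (MvPolynomial σ k)) :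
    Prop :=
  ∀ f ∈ I, ∀ d : ℕ, MvPolynomial.homogeneousComponent d f ∈ I

/-- A monomial ideal is an ideal generated by (monic) monomials. -/
def IsMonomialIdeal {k : Type*} [CommRing k] {σ : Type*} (I : Ideal (MvPolynomial σ k)) :
    Prop :=
  ∃ s : Set (σ →₀ ℕ), I = Ideal.span ((fun d => monomial d (1 : k)) '' s)

/-- A squarefree monomial ideal is an ideal generated by squarefree (monic) monomials. -/
def IsSquarefreeMonomialIdeal {k : Type*} [CommRing k] {n : ℕ}
    (I : Ideal (MvPolynomial (Fin n) k)) : Prop :=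
  ∃ s : Set (Finset (Fin n)), I = Ideal.span ((fun F => ∏ i ∈ F, X i) '' s)

/-- For `f = ∑ i in T, X i`, the ideal `N_f` generated by those variables `x_j` such that `j`
is adjacent in `G` to every vertex of `T`. -/
noncomputable def commonNeighborIdeal (k : Type*) [CommRing k] {n : ℕ} (G : SimpleGraph (Fin n))
    (T : Finset (Fin n)) : Ideal (MvPolynomial (Fin n) k) :=
  Ideal.span {p | ∃ j : Fin n, (∀ i ∈ T, G.Adj i j) ∧ p = X j}

/-! If `deg f ≥ 2`, then comparing degree-`2` components shows that every generator `xᵢxⱼ`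
of `I(G) = fB + A` already lies in `A`: the degree-`2` part of `f b` vanishes because `b`, lying in
the proper homogeneous ideal `B`, has no constant term. Hence `A = I(G)`, and
`ht(A) + 1 = ht(A)` forces `ht(A) = ∞`, which is impossible for a proper ideal of the Noetherian
ring `S`. -/

section Homogeneous

variable {σ R : Type*}

lemma IsHomogeneousIdeal.coeff_zero_eq_zero [Field R] {B : Ideal (MvPolynomial σ R)}
    (hB : IsHomogeneousIdeal B) (hBne : B ≠ ⊤) {b : MvPolynomial σ R} (hb : b ∈ B) :
    coeff 0 b = 0 := by
  by_contra hc
  have hCb : C (coeff 0 b) ∈ B := homogeneousComponent_zero b ▸ hB b hb 0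
  exact hBne (Ideal.eq_top_of_isUnit_mem _ hCb ((isUnit_iff_ne_zero.2 hc).map C))

lemma homogeneousComponent_mul_eq_zero_of_le [CommSemiring R] {f b : MvPolynomial σ R} {d e : ℕ}
    (hf : f.IsHomogeneous d) (hb : coeff 0 b = 0) (hed : e ≤ d) :
    homogeneousComponent e (f * b) = 0 := by
  classical
  refine homogeneousComponent_eq_zero' _ _ fun m hm => ?_
  obtain ⟨u, hu, v, hv, rfl⟩ := Finset.mem_add.1 (support_mul f b hm)
  have hv0 : v ≠ 0 := by
    rintro rfl
    exact mem_support_iff.1 hv hb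
  have hu_deg : u.degree = d := by
    rw [Finsupp.degree_eq_weight_one]
    exact hf (mem_support_iff.1 hu)
  have hv_pos : 0 < v.degree := Nat.pos_of_ne_zero ((Finsupp.degree_eq_zero_iff v).not.2 hv0)
  rw [map_add]
  omega

lemma mem_of_isHomogeneous_of_mem_span_singleton_mul_sup [Field R]
    {A B : Ideal (MvPolynomial σ R)} (hA : IsHomogeneousIdeal A) (hB : IsHomogeneousIdeal B)
    (hBne : B ≠ ⊤) {f p : MvPolynomial σ R} {d e : ℕ} (hf : f.IsHomogeneous d)
    (hp : p.IsHomogeneous e) (hed : e ≤ d) (hpfBA : p ∈ Ideal.span {f} * B + A) : p ∈ A := by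
  obtain ⟨fb, hfb, a, ha, rfl⟩ := Submodule.mem_sup.1 hpfBA
  obtain ⟨b, hbB, rfl⟩ := Ideal.mem_span_singleton_mul.1 hfb
  have hfb_e : homogeneousComponent e (f * b) = 0 :=
    homogeneousComponent_mul_eq_zero_of_le hf (hB.coeff_zero_eq_zero hBne hbB) hed
  rw [← homogeneousComponent_eq_self hp, map_add, hfb_e, zero_add]
  exact hA a ha e

end Homogeneous

lemma edgeIdeal_le_of_eq_span_singleton_mul_sup {k : Type*} [Field k] {n : ℕ}
    {G : SimpleGraph (Fin n)} {A B : Ideal (MvPolynomial (Fin n) k)}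
    (hA : IsHomogeneousIdeal A) (hB : IsHomogeneousIdeal B) (hBne : B ≠ ⊤)
    {f : MvPolynomial (Fin n) k} {d : ℕ} (hf : f.IsHomogeneous d) (hd : 2 ≤ d)
    (hlink : edgeIdeal k G = Ideal.span {f} * B + A) : edgeIdeal k G ≤ A := by
  rw [edgeIdeal, Ideal.span_le]
  rintro _ ⟨i, j, hij, rfl⟩
  refine mem_of_isHomogeneous_of_mem_span_singleton_mul_sup hA hB hBne hf
    ((isHomogeneous_X k i).mul (isHomogeneous_X k j)) hd ?_
  rw [← hlink]
  exact Ideal.subset_span ⟨i, j, hij, rfl⟩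

lemma Ideal.ht_ne_top {R : Type*} [CommRing R] [IsNoetherianRing R] {I : Ideal R}
    (hI : I ≠ ⊤) : I.ht ≠ ⊤ := by
  obtain ⟨M, hM, hIM⟩ := Ideal.exists_le_maximal I hI
  let P : PrimeSpectrum R := ⟨M, hM.isPrime⟩
  have hle : I.ht ≤ Order.height P := iInf_le (fun Q : {Q : PrimeSpectrum R // I ≤ Q.asIdeal} =>
    Order.height Q.1) ⟨P, hIM⟩
  rw [← PrimeSpectrum.height_eq_orderHeight] at hle
  exact ne_top_of_le_ne_top (Ideal.height_ne_top hM.ne_top) hle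

theorem stmt5_general {k : Type*} [Field k] {n : ℕ} (G : SimpleGraph (Fin n))
    (A B : Ideal (MvPolynomial (Fin n) k))
    (hAhom : IsHomogeneousIdeal A) (hBhom : IsHomogeneousIdeal B)
    (hAproper : A ≠ ⊤) (hBproper : B ≠ ⊤)
    (f : MvPolynomial (Fin n) k) (df : ℕ) (hdf : 0 < df) (hfhom : f.IsHomogeneous df)
    (hlink : edgeIdeal k G = Ideal.span {f} * B + A)
    (hht : Ideal.ht A + 1 = Ideal.ht (edgeIdeal k G)) :
    df = 1 := by
  by_contra hdf1
  have hAG : A = edgeIdeal k G := le_antisymm (hlink ▸ le_sup_right)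
    (edgeIdeal_le_of_eq_span_singleton_mul_sup hAhom hBhom hBproper hfhom (by omega) hlink)
  rw [← hAG] at hht
  exact ((ENat.lt_add_one_iff (Ideal.ht_ne_top hAproper)).2 le_rfl).ne' hht

/-- the paper's Corollary 3.3: if the edge ideal of a graph with at least one
edge satisfies `I(G) = fB + A` with `A`, `B` proper homogeneous ideals, `f` homogeneous of
positive degree, and `ht(A) + 1 = ht(I(G))`, then `deg f = 1`. -/
theorem stmt5 {k : Type*} [Field k] {n : ℕ} (G : SimpleGraph (Fin n))
    (hG : ∃ i j, G.Adj i j)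
    (A B : Ideal (MvPolynomial (Fin n) k))
    (hAhom : IsHomogeneousIdeal A) (hBhom : IsHomogeneousIdeal B)
    (hAproper : A ≠ ⊤) (hBproper : B ≠ ⊤)
    (f : MvPolynomial (Fin n) k) (df : ℕ) (hdf : 0 < df) (hfhom : f.IsHomogeneous df)
    (hf0 : f ≠ 0)
    (hlink : edgeIdeal k G = Ideal.span {f} * B + A)
    (hht : Ideal.ht A + 1 = Ideal.ht (edgeIdeal k G)) :
    df = 1 :=
  stmt5_general G A B hAhom hBhom hAproper hBproper f df hdf hfhom hlink hht
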